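/- Let M be a pointed metric space and let Λ be a positive bounded linear functional on ℓ∞(M̃). The following statements are equivalent: (i) ‖Λ∘Φ‖ = ‖Λ‖; (ii) for every γ ∈ (0,1) there exist a subset A of M̃ and f in the closed unit ball of Lip_0(M) satisfying Λ(A) ≥ γ·Λ(M̃) and f(m_{x,y}) ≥ γ for all (x,y) ∈ A; (iii) for every γ ∈ (0,1) there exists a γ-cyclically monotonic subset A of M̃ satisfying Λ(A) ≥ γ·Λ(M̃). -/

import Mathlib

open scoped ENNReal

/-- The set `M̃ = {(x,y) : x ≠ y}` as a subtype. -/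
def Mt (M : Type*) : Type _ := {p : M × M // p.1 ≠ p.2}

variable {M : Type*} [MetricSpace M]

/-- `ℓ∞(M̃)`. -/
noncomputable abbrev ellInfty (M : Type*) : Type _ := ↥(lp (fun _ : Mt M => ℝ) ∞)

/-- A bounded linear functional on `ℓ∞(M̃)` is positive if it is nonnegative on
nonnegative functions. -/
def IsPositive {M : Type*} (Λ : ellInfty M →L[ℝ] ℝ) : Prop :=
  ∀ h : ellInfty M, (∀ p : Mt M, 0 ≤ h p) → 0 ≤ Λ h

/-- The indicator function of `A ⊆ M̃` as an element of `ℓ∞(M̃)`. -/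
noncomputable def indicLp {M : Type*} (A : Set (Mt M)) : ellInfty M :=
  ⟨A.indicator 1, memℓp_infty (by
    refine ⟨1, ?_⟩
    rintro r ⟨p, rfl⟩
    by_cases hp : p ∈ A <;>
      simp [Set.indicator_apply, hp])⟩

/-- The image of `Lip₀(M)` in `ℓ∞(M̃)` under the de Leeuw embedding `Φ`;
`Lip₀(M)` itself is identified with this submodule, carrying the induced
(Lipschitz) norm, and `Φ` is then the inclusion `(LipO M base).subtypeL`. -/
noncomputable def LipO (M : Type*) [MetricSpace M] (base : M) :
    Submodule ℝ (ellInfty M) where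
  carrier := {g | ∃ f : M → ℝ, f base = 0 ∧
    ∀ p : Mt M, g p = (f p.1.1 - f p.1.2) / dist p.1.1 p.1.2}
  add_mem' := by
    rintro g₁ g₂ ⟨f₁, hf₁, h₁⟩ ⟨f₂, hf₂, h₂⟩
    refine ⟨f₁ + f₂, by simp [hf₁, hf₂], fun p => ?_⟩
    have : (⇑(g₁ + g₂) : Mt M → ℝ) = ⇑g₁ + ⇑g₂ := lp.coeFn_add g₁ g₂
    rw [this]
    simp only [Pi.add_apply, h₁ p, h₂ p]
    ring
  zero_mem' := by
    refine ⟨0, rfl, fun p => ?_⟩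
    have : (⇑(0 : ellInfty M) : Mt M → ℝ) = 0 := lp.coeFn_zero _ _
    simp [this]
  smul_mem' := by
    rintro c g ⟨f, hf, h⟩
    refine ⟨c • f, by simp [hf], fun p => ?_⟩
    have : (⇑(c • g) : Mt M → ℝ) = c • ⇑g := lp.coeFn_smul c g
    rw [this]
    simp only [Pi.smul_apply, smul_eq_mul, h p]
    ring

open Classical in
/-- Evaluation of (the function represented by) `g ∈ Lip₀(M)` at `x`. -/
noncomputable def evalAux (base x : M) (g : ↥(LipO M base)) : ℝ :=
  if h : x = base then 0
  else ((g : ellInfty M) : Mt M → ℝ) ⟨(x, base), h⟩ * dist x base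

/-- The evaluation functional `δ_x : Lip₀(M) → ℝ`, `δ_x(f) = f(x)`
(recovering `f` from its de Leeuw transform). -/
noncomputable def deltaF (base x : M) : ↥(LipO M base) →L[ℝ] ℝ :=
  LinearMap.mkContinuous
    { toFun := evalAux base x
      map_add' := fun g₁ g₂ => by
        unfold evalAux
        split_ifs with h
        · simp
        · simp only [Submodule.coe_add, lp.coeFn_add, Pi.add_apply]
          erw [Pi.add_apply]
          ring
      map_smul' := fun c g => by
        unfold evalAux
        split_ifs with h
        · simp
        · simp only [Submodule.coe_smul, lp.coeFn_smul, Pi.smul_apply,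
            smul_eq_mul, RingHom.id_apply]
          erw [Pi.smul_apply, smul_eq_mul]
          ring }
    (dist x base)
    (by
      intro g
      simp only [LinearMap.coe_mk, AddHom.coe_mk]
      unfold evalAux
      split_ifs with h
      · subst h
        rw [norm_zero, dist_self, zero_mul]
      · have h1 : ‖((g : ellInfty M) : Mt M → ℝ) ⟨(x, base), h⟩‖ ≤ ‖(g : ellInfty M)‖ :=
          lp.norm_apply_le_norm ENNReal.top_ne_zero (g : ellInfty M) ⟨(x, base), h⟩
        have h2 : ‖(g : ellInfty M)‖ = ‖g‖ := rfl
        calc ‖((g : ellInfty M) : Mt M → ℝ) ⟨(x, base), h⟩ * dist x base‖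
            = ‖((g : ellInfty M) : Mt M → ℝ) ⟨(x, base), h⟩‖ * dist x base := by
              rw [norm_mul, Real.norm_eq_abs (dist x base), abs_of_nonneg dist_nonneg]
          _ ≤ ‖g‖ * dist x base := by
              exact mul_le_mul_of_nonneg_right (h2 ▸ h1) dist_nonneg
          _ = dist x base * ‖g‖ := mul_comm _ _)

/-- The Lipschitz-free space `F(M)`: the closed linear span of the evaluation
functionals inside the dual of `Lip₀(M)`. -/
noncomputable def FreeSpan (M : Type*) [MetricSpace M] (base : M) :
    Submodule ℝ (↥(LipO M base) →L[ℝ] ℝ) :=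
  Submodule.span ℝ (Set.range (deltaF base))

/-- The Lipschitz-free space `F(M)`: the closed linear span of the evaluation
functionals inside the dual of `Lip₀(M)`. -/
noncomputable def FreeSp (M : Type*) [MetricSpace M] (base : M) :
    Set (↥(LipO M base) →L[ℝ] ℝ) :=
  closure (FreeSpan M base : Set (↥(LipO M base) →L[ℝ] ℝ))

/-- The weak-star topology `σ(Lip₀(M), F(M))` on `Lip₀(M)`. -/
noncomputable def wstar (M : Type*) [MetricSpace M] (base : M) :
    TopologicalSpace ↥(LipO M base) :=
  TopologicalSpace.induced
    (fun g => fun μ : FreeSp M base => (μ : ↥(LipO M base) →L[ℝ] ℝ) g)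
    inferInstance

variable {M : Type*} [MetricSpace M]

/-- The de Leeuw quotient `f(m_{x,y}) = (f x - f y)/d(x,y)`. -/
noncomputable def mQ (f : M → ℝ) (p : Mt M) : ℝ :=
  (f p.1.1 - f p.1.2) / dist p.1.1 p.1.2

/-- `A ⊆ M̃` is `γ`-cyclically monotonic. -/
def GammaCM (γ : ℝ) (A : Set (Mt M)) : Prop :=
  ∀ (n : ℕ) (p : Fin (n + 1) → Mt M), (∀ i, p i ∈ A) →
    0 ≤ ∑ i : Fin (n + 1),
      min (dist (p i).1.1 (p (i + 1)).1.2 - γ * dist (p i).1.1 (p i).1.2)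
          (dist (p i).1.2 (p (i + 1)).1.2)

/-- `A ⊆ M̃` is cyclically monotonic. -/
def CyclMono (A : Set (Mt M)) : Prop :=
  ∀ (n : ℕ) (p : Fin (n + 1) → Mt M), (∀ i, p i ∈ A) →
    ∑ i : Fin (n + 1), dist (p i).1.1 (p i).1.2 ≤
      ∑ i : Fin (n + 1), dist (p i).1.1 (p (i + 1)).1.2

/-- `π(A)`. -/
def piA (A : Set (Mt M)) : Set M := {z | ∃ p ∈ A, p.1.1 = z ∨ p.1.2 = z}

/-- The pair `(u,v)` as an element of `M̃`. -/
def pr {M : Type*} (u v : M) (h : u ≠ v) : Mt M := ⟨(u, v), h⟩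


/-!
For positive `Λ`, `‖Λ‖ = Λ(𝟙)`, and `‖Λ ∘ Φ‖` is the supremum of `Λ(Φ f)` over `1`-Lipschitz `f`
vanishing at the base point. If `‖Λ ∘ Φ‖ = ‖Λ‖`, pick such an `f` with `Λ(Φ f) ≥ (2γ - γ²) Λ(𝟙)`;
on the superlevel set `A = {Φ f ≥ γ}` we have `Φ f ≤ (1 - γ) 𝟙_A + γ`, which forces
`Λ(A) ≥ γ Λ(𝟙)`. Conversely `Φ f ≥ (1 + γ) 𝟙_A - 1` gives `‖Λ ∘ Φ‖ ≥ (γ² + γ - 1) Λ(𝟙)`, and we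
let `γ → 1`.

A superlevel set `{Φ f ≥ γ}` of a `1`-Lipschitz `f` is `γ`-cyclically monotonic by telescoping `f`
along the cycle. Conversely, for a `γ`-cyclically monotonic `A` let `f z` be the infimum of the
costs of walks from `z` to the base point which may cross pairs `(x, y) ∈ A` from `y` to `x` at
cost `-γ d(x, y)`. Closing such a walk into a cycle costs at least `0`, so `f` is finite; it is
`1`-Lipschitz, vanishes at the base point, and `f x - f y ≥ γ d(x, y)` on `A`.
-/

open Filter Topology

lemma le_mQ_iff {γ : ℝ} {f : M → ℝ} {p : Mt M} :
    γ ≤ mQ f p ↔ γ * dist p.1.1 p.1.2 ≤ f p.1.1 - f p.1.2 :=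
  le_div_iff₀ (dist_pos.2 p.2)

lemma abs_mQ_le {f : M → ℝ} (hf : LipschitzWith 1 f) (p : Mt M) : |mQ f p| ≤ 1 := by
  rw [mQ, abs_div, abs_of_pos (dist_pos.2 p.2), div_le_one (dist_pos.2 p.2), ← Real.dist_eq]
  simpa using hf.dist_le_mul p.1.1 p.1.2

omit [MetricSpace M] in
lemma indicLp_apply (A : Set (Mt M)) (p : Mt M) : (indicLp A : Mt M → ℝ) p = A.indicator 1 p :=
  rfl

omit [MetricSpace M] in
lemma IsPositive.apply_le {Λ : ellInfty M →L[ℝ] ℝ} (hΛ : IsPositive Λ) {g : ellInfty M}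
    {A : Set (Mt M)} {a b : ℝ} (hg : ∀ p, g p ≤ a * A.indicator 1 p + b) :
    Λ g ≤ a * Λ (indicLp A) + b * Λ (indicLp Set.univ) := by
  have := hΛ (a • indicLp A + b • indicLp Set.univ - g) fun p => by
    simp only [lp.coeFn_sub, lp.coeFn_add, lp.coeFn_smul, Pi.sub_apply, Pi.add_apply,
      Pi.smul_apply, indicLp_apply, Set.indicator_univ, Pi.one_apply, smul_eq_mul, mul_one]
    linarith [hg p]
  simpa [sub_nonneg] using this

omit [MetricSpace M] in
lemma IsPositive.norm_eq {Λ : ellInfty M →L[ℝ] ℝ} (hΛ : IsPositive Λ) :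
    ‖Λ‖ = Λ (indicLp Set.univ) := by
  have hone : ‖(indicLp Set.univ : ellInfty M)‖ ≤ 1 :=
    lp.norm_le_of_forall_le zero_le_one fun p => by simp [indicLp_apply]
  refine le_antisymm (Λ.opNorm_le_bound (hΛ _ fun p => by simp [indicLp_apply]) fun g => ?_)
    ((Real.le_norm_self _).trans (Λ.le_opNorm_of_le hone) |>.trans_eq (mul_one _))
  have hbound : ∀ g : ellInfty M, Λ g ≤ ‖g‖ * Λ (indicLp Set.univ) := fun g => by
    simpa using hΛ.apply_le (A := Set.univ) (b := 0) fun p => by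
      simpa using (abs_le.1 (lp.norm_apply_le_norm ENNReal.top_ne_zero g p)).2
  rw [Real.norm_eq_abs, abs_le, mul_comm]
  constructor
  · exact neg_le.2 (by simpa using hbound (-g))
  · exact hbound g

lemma ContinuousLinearMap.exists_mul_opNorm_le_apply {E : Type*} [NormedAddCommGroup E]
    [NormedSpace ℝ E] (T : E →L[ℝ] ℝ) {t : ℝ} (ht : t < 1) :
    ∃ x, ‖x‖ ≤ 1 ∧ t * ‖T‖ ≤ T x := by
  rcases (norm_nonneg T).eq_or_lt with hT | hT
  · exact ⟨0, by simp, by simp [← hT]⟩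
  obtain ⟨x, hx, hTx⟩ := T.exists_lt_apply_of_lt_opNorm (r := t * ‖T‖) (by nlinarith)
  rw [Real.norm_eq_abs] at hTx
  rcases le_total 0 (T x) with hx0 | hx0
  · exact ⟨x, hx.le, by rw [abs_of_nonneg hx0] at hTx; exact hTx.le⟩
  · exact ⟨-x, by simpa using hx.le, by rw [abs_of_nonpos hx0] at hTx; simpa using hTx.le⟩

lemma LipO.exists_lipschitzWith {base : M} (g : LipO M base) (hg : ‖g‖ ≤ 1) :
    ∃ f : M → ℝ, f base = 0 ∧ LipschitzWith 1 f ∧ ∀ p, (g : ellInfty M) p = mQ f p := by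
  obtain ⟨f, hf0, hgf⟩ := g.2
  refine ⟨f, hf0, LipschitzWith.of_dist_le_mul fun x y => ?_, hgf⟩
  by_cases hxy : x = y
  · simp [hxy]
  have hd := dist_pos.2 hxy
  have : ‖(f x - f y) / dist x y‖ ≤ 1 := by
    rw [← hgf ⟨(x, y), hxy⟩]
    exact (lp.norm_apply_le_norm ENNReal.top_ne_zero (g : ellInfty M) _).trans hg
  rw [Real.norm_eq_abs, abs_div, abs_of_pos hd, div_le_one hd] at this
  simpa [Real.dist_eq] using this

lemma exists_LipO_of_lipschitzWith {base : M} {f : M → ℝ} (hf0 : f base = 0)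
    (hf : LipschitzWith 1 f) : ∃ g : LipO M base, ‖g‖ ≤ 1 ∧ ∀ p, (g : ellInfty M) p = mQ f p :=
  ⟨⟨⟨mQ f, memℓp_infty ⟨1, by rintro _ ⟨p, rfl⟩; exact abs_mQ_le hf p⟩⟩, f, hf0, fun _ => rfl⟩,
    lp.norm_le_of_forall_le zero_le_one fun p => abs_mQ_le hf p, fun _ => rfl⟩

lemma gammaCM_of_le_mQ {γ : ℝ} {A : Set (Mt M)} {f : M → ℝ} (hf : LipschitzWith 1 f)
    (hfA : ∀ p ∈ A, γ ≤ mQ f p) : GammaCM γ A := by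
  intro n q hq
  have hle : ∀ a b, f a - f b ≤ dist a b := fun a b =>
    sub_le_iff_le_add'.2 (by simpa using hf.le_add_mul a b)
  have hstep : ∀ i, f (q i).1.2 - f (q (i + 1)).1.2 ≤
      min (dist (q i).1.1 (q (i + 1)).1.2 - γ * dist (q i).1.1 (q i).1.2)
        (dist (q i).1.2 (q (i + 1)).1.2) := fun i =>
    le_min (by linarith [le_mQ_iff.1 (hfA _ (hq i)), hle (q i).1.1 (q (i + 1)).1.2]) (hle _ _)
  have hshift : ∑ i, f (q (i + 1)).1.2 = ∑ i, f (q i).1.2 :=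
    Fintype.sum_equiv (Equiv.addRight 1) _ _ fun _ => rfl
  have htelescope : ∑ i, (f (q i).1.2 - f (q (i + 1)).1.2) = 0 := by
    rw [Finset.sum_sub_distrib, hshift, sub_self]
  exact htelescope.symm.le.trans (Finset.sum_le_sum fun i _ => hstep i)

section Paths

noncomputable def pathCost (γ : ℝ) (w : M) : M → List (Mt M) → ℝ
  | x, [] => dist x w
  | x, p :: l => dist x p.1.2 - γ * dist p.1.1 p.1.2 + pathCost γ w p.1.1 l

variable {γ : ℝ}

lemma pathCost_le_dist_add (w x x' : M) (l : List (Mt M)) :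
    pathCost γ w x' l ≤ dist x' x + pathCost γ w x l := by
  cases l with
  | nil => exact dist_triangle x' x w
  | cons p l =>
    simp only [pathCost]
    linarith [dist_triangle x' x p.1.2]

lemma pathCost_le_add_dist (w w' : M) (l : List (Mt M)) (x : M) :
    pathCost γ w' x l ≤ pathCost γ w x l + dist w w' := by
  induction l generalizing x with
  | nil => exact dist_triangle x w w'
  | cons p l ih =>
    simp only [pathCost]
    linarith [ih p.1.1]

lemma pathCost_ofFn (w : M) (n : ℕ) (q : Fin (n + 1) → Mt M) :
    pathCost γ w (q 0).1.1 (List.ofFn fun i : Fin n => q i.succ) =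
      ∑ i : Fin n,
          (dist (q i.castSucc).1.1 (q i.succ).1.2 - γ * dist (q i.succ).1.1 (q i.succ).1.2) +
        dist (q (Fin.last n)).1.1 w := by
  induction n with
  | zero => simp [pathCost]
  | succ n ih =>
    rw [List.ofFn_succ, pathCost, ih (fun i => q i.succ), Fin.sum_univ_succ]
    simp only [Fin.succ_castSucc, Fin.castSucc_zero, Fin.succ_last]
    ring

lemma sum_cycle_eq_pathCost (n : ℕ) (q : Fin (n + 1) → Mt M) :
    ∑ i, (dist (q i).1.1 (q (i + 1)).1.2 - γ * dist (q i).1.1 (q i).1.2) =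
      pathCost γ (q 0).1.2 (q 0).1.1 (List.ofFn fun i : Fin n => q i.succ)
        - γ * dist (q 0).1.1 (q 0).1.2 := by
  have hγ := Fin.sum_univ_succ fun i => γ * dist (q i).1.1 (q i).1.2
  rw [pathCost_ofFn, Finset.sum_sub_distrib, Finset.sum_sub_distrib, Fin.sum_univ_castSucc,
    Fin.last_add_one]
  simp only [Fin.coeSucc_eq_succ]
  linarith

variable {A : Set (Mt M)}

lemma GammaCM.mul_dist_le_pathCost (hA : GammaCM γ A) {p : Mt M} (hp : p ∈ A)
    {l : List (Mt M)} (hl : ∀ q ∈ l, q ∈ A) :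
    γ * dist p.1.1 p.1.2 ≤ pathCost γ p.1.2 p.1.1 l := by
  set q : Fin (l.length + 1) → Mt M := Fin.cons p l.get
  have hq : ∀ i, q i ∈ A := Fin.cases hp fun i => hl _ (List.get_mem l i)
  have hcycle := sum_cycle_eq_pathCost (γ := γ) l.length q
  simp only [q, Fin.cons_zero, Fin.cons_succ, List.ofFn_get] at hcycle
  have hmin := (hA l.length q hq).trans (Finset.sum_le_sum fun i _ => min_le_left _ _)
  linarith

lemma GammaCM.neg_dist_le_pathCost (hA : GammaCM γ A) (w x : M) {l : List (Mt M)}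
    (hl : ∀ q ∈ l, q ∈ A) : -dist x w ≤ pathCost γ w x l := by
  cases l with
  | nil => exact neg_le_self dist_nonneg
  | cons p l =>
    have hp := hA.mul_dist_le_pathCost (hl p List.mem_cons_self)
      fun q hq => hl q (List.mem_cons_of_mem p hq)
    have hw := pathCost_le_add_dist (γ := γ) w p.1.2 l p.1.1
    simp only [pathCost]
    linarith [dist_triangle w x p.1.2, dist_comm x w]

noncomputable def pathPotential (γ : ℝ) (A : Set (Mt M)) (base z : M) : ℝ :=
  ⨅ l : {l : List (Mt M) // ∀ q ∈ l, q ∈ A}, pathCost γ base z l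

instance (A : Set (Mt M)) : Nonempty {l : List (Mt M) // ∀ q ∈ l, q ∈ A} :=
  ⟨⟨[], fun _ h => absurd h List.not_mem_nil⟩⟩

lemma GammaCM.bddBelow_range_pathCost (hA : GammaCM γ A) (base z : M) :
    BddBelow (Set.range fun l : {l : List (Mt M) // ∀ q ∈ l, q ∈ A} =>
      pathCost γ base z l) :=
  ⟨-dist z base, by rintro _ ⟨l, rfl⟩; exact hA.neg_dist_le_pathCost base z l.2⟩

lemma GammaCM.pathPotential_le (hA : GammaCM γ A) (base z : M) {l : List (Mt M)}
    (hl : ∀ q ∈ l, q ∈ A) : pathPotential γ A base z ≤ pathCost γ base z l :=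
  ciInf_le (hA.bddBelow_range_pathCost base z) ⟨l, hl⟩

lemma GammaCM.exists_lipschitzWith_le_mQ (hA : GammaCM γ A) (base : M) :
    ∃ f : M → ℝ, f base = 0 ∧ LipschitzWith 1 f ∧ ∀ p ∈ A, γ ≤ mQ f p := by
  refine ⟨pathPotential γ A base, ?_, LipschitzWith.of_le_add fun z z' => ?_, fun p hp => ?_⟩
  · have hle : pathPotential γ A base base ≤ 0 := by
      simpa [pathCost] using hA.pathPotential_le base base (l := []) (by simp)
    have hge : -dist base base ≤ pathPotential γ A base base :=
      le_ciInf fun l => hA.neg_dist_le_pathCost base base l.2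
    exact le_antisymm hle (by simpa using hge)
  · rw [← sub_le_iff_le_add]
    refine le_ciInf fun l => ?_
    linarith [hA.pathPotential_le base z l.2, pathCost_le_dist_add (γ := γ) base z' z l]
  · have hjump :
        pathPotential γ A base p.1.2 + γ * dist p.1.1 p.1.2 ≤ pathPotential γ A base p.1.1 := by
      refine le_ciInf fun l => ?_
      have := hA.pathPotential_le base p.1.2 (l := p :: l.1) (List.forall_mem_cons.2 ⟨hp, l.2⟩)
      simp only [pathCost, dist_self] at this
      linarith
    exact le_mQ_iff.2 (by linarith)

end Paths

section Equivalence

variable {base : M} {Λ : ellInfty M →L[ℝ] ℝ}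

lemma exists_superlevel_of_norm_comp_subtypeL_eq (hΛ : IsPositive Λ)
    (hnorm : ‖Λ.comp (LipO M base).subtypeL‖ = ‖Λ‖) {γ : ℝ} (hγ1 : γ < 1) :
    ∃ (A : Set (Mt M)) (f : M → ℝ), f base = 0 ∧ LipschitzWith 1 f ∧
      γ * Λ (indicLp Set.univ) ≤ Λ (indicLp A) ∧ ∀ p ∈ A, γ ≤ mQ f p := by
  obtain ⟨g, hg, hΛg⟩ := (Λ.comp (LipO M base).subtypeL).exists_mul_opNorm_le_apply
    (t := 2 * γ - γ ^ 2) (by nlinarith)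
  obtain ⟨f, hf0, hf, hgf⟩ := LipO.exists_lipschitzWith g hg
  refine ⟨{p | γ ≤ mQ f p}, f, hf0, hf, ?_, fun p hp => hp⟩
  have hup : Λ g ≤ (1 - γ) * Λ (indicLp {p | γ ≤ mQ f p}) + γ * Λ (indicLp Set.univ) :=
    hΛ.apply_le fun p => by
      rw [hgf]
      by_cases hp : γ ≤ mQ f p
      · simp only [Set.indicator_of_mem (show p ∈ {p | γ ≤ mQ f p} from hp), Pi.one_apply]
        linarith [(abs_le.1 (abs_mQ_le hf p)).2]
      · simp only [Set.indicator_of_notMem (show p ∉ {p | γ ≤ mQ f p} from hp)]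
        linarith
  rw [hnorm, hΛ.norm_eq] at hΛg
  change _ ≤ Λ g at hΛg
  refine le_of_mul_le_mul_left ?_ (sub_pos.2 hγ1)
  linarith

lemma sub_le_norm_comp_subtypeL (hΛ : IsPositive Λ) {γ : ℝ} {A : Set (Mt M)} {f : M → ℝ}
    (hf0 : f base = 0) (hf : LipschitzWith 1 f) (hfA : ∀ p ∈ A, γ ≤ mQ f p) :
    (1 + γ) * Λ (indicLp A) - Λ (indicLp Set.univ) ≤ ‖Λ.comp (LipO M base).subtypeL‖ := by
  obtain ⟨g, hg, hgf⟩ := exists_LipO_of_lipschitzWith hf0 hf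
  have hlow : Λ (-g) ≤ -(1 + γ) * Λ (indicLp A) + 1 * Λ (indicLp Set.univ) :=
    hΛ.apply_le fun p => by
      rw [lp.coeFn_neg, Pi.neg_apply, hgf]
      by_cases hp : p ∈ A
      · simp only [Set.indicator_of_mem hp, Pi.one_apply]
        linarith [hfA p hp]
      · simp only [Set.indicator_of_notMem hp]
        linarith [(abs_le.1 (abs_mQ_le hf p)).1]
  have hg_le : Λ g ≤ ‖Λ.comp (LipO M base).subtypeL‖ :=
    (Real.le_norm_self _).trans <|
      ((Λ.comp (LipO M base).subtypeL).le_opNorm_of_le hg).trans_eq (mul_one _)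
  rw [map_neg] at hlow
  linarith

theorem norm_comp_subtypeL_eq_iff (hΛ : IsPositive Λ) :
    ‖Λ.comp (LipO M base).subtypeL‖ = ‖Λ‖ ↔
      ∀ γ : ℝ, 0 < γ → γ < 1 →
        ∃ (A : Set (Mt M)) (f : M → ℝ), f base = 0 ∧ LipschitzWith 1 f ∧
          γ * Λ (indicLp Set.univ) ≤ Λ (indicLp A) ∧ ∀ p ∈ A, γ ≤ mQ f p := by
  refine ⟨fun h γ _ hγ1 => exists_superlevel_of_norm_comp_subtypeL_eq hΛ h hγ1, fun H => ?_⟩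
  refine le_antisymm ((Λ.opNorm_comp_le _).trans (mul_le_of_le_one_right (norm_nonneg Λ)
    (Submodule.norm_subtypeL_le _))) ?_
  rw [hΛ.norm_eq]
  have hlim : Tendsto (fun γ : ℝ => ((1 + γ) * γ - 1) * Λ (indicLp Set.univ)) (𝓝[<] 1)
      (𝓝 (Λ (indicLp Set.univ))) := by
    have hcont : Continuous fun γ : ℝ => ((1 + γ) * γ - 1) * Λ (indicLp Set.univ) := by
      fun_prop
    convert (hcont.tendsto 1).mono_left nhdsWithin_le_nhds using 2
    norm_num
  refine le_of_tendsto hlim ?_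
  filter_upwards [Ioo_mem_nhdsLT zero_lt_one] with γ ⟨hγ0, hγ1⟩
  obtain ⟨A, f, hf0, hf, hΛA, hfA⟩ := H γ hγ0 hγ1
  have hnorm := sub_le_norm_comp_subtypeL (base := base) hΛ hf0 hf hfA
  linarith [mul_le_mul_of_nonneg_left hΛA (by linarith : (0 : ℝ) ≤ 1 + γ)]

lemma exists_lipschitzWith_iff_exists_gammaCM (γ : ℝ) :
    (∃ (A : Set (Mt M)) (f : M → ℝ), f base = 0 ∧ LipschitzWith 1 f ∧
        γ * Λ (indicLp Set.univ) ≤ Λ (indicLp A) ∧ ∀ p ∈ A, γ ≤ mQ f p) ↔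
      ∃ A : Set (Mt M), GammaCM γ A ∧ γ * Λ (indicLp Set.univ) ≤ Λ (indicLp A) := by
  constructor
  · rintro ⟨A, f, -, hf, hΛA, hfA⟩
    exact ⟨A, gammaCM_of_le_mQ hf hfA, hΛA⟩
  · rintro ⟨A, hA, hΛA⟩
    obtain ⟨f, hf0, hf, hfA⟩ := hA.exists_lipschitzWith_le_mQ base
    exact ⟨A, f, hf0, hf, hΛA, hfA⟩

end Equivalence

theorem stmt2 (base : M) (Λ : ellInfty M →L[ℝ] ℝ) (hΛ : IsPositive Λ) :
    (‖Λ.comp (LipO M base).subtypeL‖ = ‖Λ‖ ↔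
      ∀ γ : ℝ, 0 < γ → γ < 1 →
        ∃ (A : Set (Mt M)) (f : M → ℝ), f base = 0 ∧ LipschitzWith 1 f ∧
          γ * Λ (indicLp Set.univ) ≤ Λ (indicLp A) ∧ ∀ p ∈ A, γ ≤ mQ f p) ∧
    (‖Λ.comp (LipO M base).subtypeL‖ = ‖Λ‖ ↔
      ∀ γ : ℝ, 0 < γ → γ < 1 →
        ∃ A : Set (Mt M), GammaCM γ A ∧ γ * Λ (indicLp Set.univ) ≤ Λ (indicLp A)) := by
  have h12 := norm_comp_subtypeL_eq_iff (base := base) hΛ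
  exact ⟨h12, h12.trans <|
    forall₃_congr fun γ _ _ => exists_lipschitzWith_iff_exists_gammaCM γ⟩
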